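/- Explicit formula for the three-path case: with a = 1, b = 1, c = 2, the function F_{1,1,2}(x_1,x_2,x_3 | y_1,y_2,y_3), defined as the sum of weights of all pairs of vertex-disjoint Up-Right paths γ_1 : (2,1) → (1,3) and γ_2 : (3,1) → (2,3) in the 3×3 grid (weight = product of 1/(x_i+y_j) over visited cells), equals [(x_1+y_1) + (x_2+y_2) + (x_3+y_3)] · ∏_{i=1}^{3} ∏_{j=1}^{3} 1/(x_i+y_j). -/

import Mathlib

/-!
An Up-Right path from `(r+1, c)` to `(r, c+2)` makes one Up and two Right steps, so there are
exactly three of them. Of the nine combinations for `γ₁` and `γ₂`, three are disjoint, and each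
of these pairs visits every cell of the `3×3` grid except one diagonal cell `(k, k)`. Its weight
is therefore `x_k + y_k` times the product of `1/(x_i + y_j)` over all nine cells.
-/

open Finset

noncomputable section

/-- The field of rational functions over `ℚ` in variables `x_1, x_2, …` and `y_1, y_2, …`. -/
abbrev K : Type := FractionRing (MvPolynomial (ℕ ⊕ ℕ) ℚ)

/-- The variable `x_i` as an element of `K`. -/
def X (i : ℕ) : K := algebraMap (MvPolynomial (ℕ ⊕ ℕ) ℚ) K (MvPolynomial.X (Sum.inl i))

/-- The variable `y_j` as an element of `K`. -/
def Y (j : ℕ) : K := algebraMap (MvPolynomial (ℕ ⊕ ℕ) ℚ) K (MvPolynomial.X (Sum.inr j))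

/-- A step of an Up-Right lattice path: `Up` decreases the first (row) coordinate by one,
`Right` increases the second (column) coordinate by one. -/
def Step (c d : ℕ × ℕ) : Prop :=
  (d.1 + 1 = c.1 ∧ d.2 = c.2) ∨ (d.1 = c.1 ∧ d.2 = c.2 + 1)

/-- `p` is an Up-Right lattice path from cell `A` to cell `B` (listed as its sequence of
visited cells, starting at `A` and ending at `B`). -/
def IsPath (A B : ℕ × ℕ) (p : List (ℕ × ℕ)) : Prop :=
  p.Chain' Step ∧ p.head? = some A ∧ p.getLast? = some B

/-- All cells of `p` lie in the grid `{1,…,m} × {1,…,n}`. -/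
def InGrid (m n : ℕ) (p : List (ℕ × ℕ)) : Prop :=
  ∀ c ∈ p, 1 ≤ c.1 ∧ c.1 ≤ m ∧ 1 ≤ c.2 ∧ c.2 ≤ n


/-- The weight of a path: the product of `1/(x_i + y_j)` over all visited cells `(i,j)`. -/
def pathWeight (x y : ℕ → K) (p : List (ℕ × ℕ)) : K :=
  (p.map fun c => (x c.1 + y c.2)⁻¹).prod

/-- The single-path partition function: the sum of weights of all Up-Right lattice paths
from `A` to `B` inside the grid `{1,…,m} × {1,…,n}`. -/
def F1 (m n : ℕ) (x y : ℕ → K) (A B : ℕ × ℕ) : K :=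
  ∑ᶠ p : {p : List (ℕ × ℕ) // IsPath A B p ∧ InGrid m n p}, pathWeight x y p.1

/-- `γ` is a `k`-tuple of pairwise vertex-disjoint Up-Right lattice paths `γ i : A i → B i`
inside the grid `{1,…,m} × {1,…,n}`. -/
def IsTuple (m n k : ℕ) (A B : Fin k → ℕ × ℕ) (γ : Fin k → List (ℕ × ℕ)) : Prop :=
  (∀ i, IsPath (A i) (B i) (γ i) ∧ InGrid m n (γ i)) ∧
  (∀ i j, i ≠ j → ∀ c ∈ γ i, c ∉ γ j)

/-- The multi-path partition function: the sum, over all `k`-tuples of pairwise disjoint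
Up-Right lattice paths `γ i : A i → B i` in the grid `{1,…,m} × {1,…,n}`, of the product
of `1/(x_i + y_j)` over all visited cells. -/
def Ftuple (m n k : ℕ) (x y : ℕ → K) (A B : Fin k → ℕ × ℕ) : K :=
  ∑ᶠ γ : {γ : Fin k → List (ℕ × ℕ) // IsTuple m n k A B γ}, ∏ i, pathWeight x y (γ.1 i)

theorem IsPath.length_add {a b : ℕ × ℕ} {p : List (ℕ × ℕ)} (hp : IsPath a b p) :
    p.length + b.1 + a.2 = a.1 + b.2 + 1 := by
  induction p generalizing a with
  | nil => simp [IsPath] at hp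
  | cons c q ih =>
    obtain ⟨hchain : List.IsChain Step _, hhead, hlast⟩ := hp
    obtain rfl : c = a := by simpa using hhead
    cases q with
    | nil =>
      obtain rfl : c = b := by simpa using hlast
      simp only [List.length_singleton]
      omega
    | cons d q =>
      rw [List.isChain_cons_cons] at hchain
      have := ih ⟨hchain.2, rfl, by simpa using hlast⟩
      simp only [List.length_cons] at this ⊢
      rcases hchain.1 with ⟨h₁, h₂⟩ | ⟨h₁, h₂⟩ <;> omega

theorem isPath_up_right_right_iff (r c : ℕ) (p : List (ℕ × ℕ)) :
    IsPath (r + 1, c) (r, c + 2) p ↔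
      p = [(r + 1, c), (r, c), (r, c + 1), (r, c + 2)] ∨
      p = [(r + 1, c), (r + 1, c + 1), (r, c + 1), (r, c + 2)] ∨
      p = [(r + 1, c), (r + 1, c + 1), (r + 1, c + 2), (r, c + 2)] := by
  constructor
  · intro hp
    have hlen := hp.length_add
    obtain ⟨hchain : List.IsChain Step _, hhead, hlast⟩ := hp
    rcases p with _ | ⟨c₀, _ | ⟨⟨u₁, v₁⟩, _ | ⟨⟨u₂, v₂⟩, _ | ⟨c₃, _ | ⟨c₄, t⟩⟩⟩⟩⟩ <;>
      simp only [List.length_cons, List.length_nil] at hlen <;> try omega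
    simp only [List.head?_cons, List.getLast?_cons_cons, List.getLast?_singleton,
      Option.some.injEq] at hhead hlast
    subst hhead hlast
    simp only [List.isChain_cons_cons, List.isChain_singleton, and_true, Step]
      at hchain
    simp only [List.cons.injEq, Prod.mk.injEq, and_true, true_and]
    omega
  · rintro (rfl | rfl | rfl) <;> exact ⟨show List.IsChain Step _ by simp [Step], rfl, rfl⟩

theorem isTuple_two_iff {m n : ℕ} {A B : Fin 2 → ℕ × ℕ} {p q : List (ℕ × ℕ)} :
    IsTuple m n 2 A B ![p, q] ↔
      (IsPath (A 0) (B 0) p ∧ InGrid m n p) ∧ (IsPath (A 1) (B 1) q ∧ InGrid m n q) ∧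
        ∀ c ∈ p, c ∉ q := by
  constructor
  · rintro ⟨hpaths, hdisj⟩
    exact ⟨hpaths 0, hpaths 1, hdisj 0 1 (by decide)⟩
  · rintro ⟨hp, hq, hpq⟩
    refine ⟨Fin.forall_fin_two.2 ⟨hp, hq⟩, fun i j hij c hci hcj => ?_⟩
    fin_cases i <;> fin_cases j
    exacts [hij rfl, hpq c hci hcj, hpq c hcj hci, hij rfl]

def pairAvoiding₃₃ : Fin 2 → List (ℕ × ℕ) :=
  ![[(2, 1), (1, 1), (1, 2), (1, 3)], [(3, 1), (3, 2), (2, 2), (2, 3)]]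

def pairAvoiding₂₂ : Fin 2 → List (ℕ × ℕ) :=
  ![[(2, 1), (1, 1), (1, 2), (1, 3)], [(3, 1), (3, 2), (3, 3), (2, 3)]]

def pairAvoiding₁₁ : Fin 2 → List (ℕ × ℕ) :=
  ![[(2, 1), (2, 2), (1, 2), (1, 3)], [(3, 1), (3, 2), (3, 3), (2, 3)]]

theorem isTuple_three_by_three_iff (γ : Fin 2 → List (ℕ × ℕ)) :
    IsTuple 3 3 2 (fun i => ((i : ℕ) + 2, 1)) (fun i => ((i : ℕ) + 1, 3)) γ ↔
      γ = pairAvoiding₃₃ ∨ γ = pairAvoiding₂₂ ∨ γ = pairAvoiding₁₁ := by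
  obtain ⟨p, q, rfl⟩ : ∃ p q, γ = ![p, q] := ⟨γ 0, γ 1, by ext i; fin_cases i <;> rfl⟩
  rw [isTuple_two_iff]
  constructor
  · rintro ⟨⟨hp, -⟩, ⟨hq, -⟩, hpq⟩
    rcases (isPath_up_right_right_iff 1 1 p).1 hp with rfl | rfl | rfl <;>
      rcases (isPath_up_right_right_iff 2 1 q).1 hq with rfl | rfl | rfl <;>
      simp [pairAvoiding₃₃, pairAvoiding₂₂, pairAvoiding₁₁] at hpq ⊢
  · rintro (h | h | h) <;>
      simp only [pairAvoiding₃₃, pairAvoiding₂₂, pairAvoiding₁₁, Matrix.vecCons_inj, and_true]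
        at h <;>
      obtain ⟨rfl, rfl⟩ := h <;>
      exact ⟨⟨(isPath_up_right_right_iff 1 1 _).2 (by simp), by simp [InGrid]⟩,
        ⟨(isPath_up_right_right_iff 2 1 _).2 (by simp), by simp [InGrid]⟩, by decide⟩

theorem Ftuple_eq_sum {m n k : ℕ} {x y : ℕ → K} {A B : Fin k → ℕ × ℕ}
    (s : Finset (Fin k → List (ℕ × ℕ))) (hs : ∀ γ, IsTuple m n k A B γ ↔ γ ∈ s) :
    Ftuple m n k x y A B = ∑ γ ∈ s, ∏ i, pathWeight x y (γ i) := by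
  have hset : {γ | IsTuple m n k A B γ} = ↑s := Set.ext hs
  rw [Ftuple, ← finsum_mem_coe_finset, ← hset]
  exact finsum_set_coe_eq_finsum_mem
    (f := fun γ : Fin k → List (ℕ × ℕ) => ∏ i, pathWeight x y (γ i)) _

theorem pathWeight_eq_prod_toFinset (x y : ℕ → K) {p : List (ℕ × ℕ)} (hp : p.Nodup) :
    pathWeight x y p = ∏ c ∈ p.toFinset, (x c.1 + y c.2)⁻¹ :=
  (List.prod_toFinset _ hp).symm

theorem Finset.prod_erase_inv {α F : Type*} [DecidableEq α] [Field F] {s : Finset α}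
    {f : α → F} {a : α} (ha : a ∈ s) (hfa : f a ≠ 0) :
    ∏ b ∈ s.erase a, (f b)⁻¹ = f a * ∏ b ∈ s, (f b)⁻¹ := by
  rw [← Finset.mul_prod_erase s _ ha, ← mul_assoc, mul_inv_cancel₀ hfa, one_mul]

theorem prod_pathWeight_two_of_toFinset_eq_erase {x y : ℕ → K} {γ : Fin 2 → List (ℕ × ℕ)}
    {s : Finset (ℕ × ℕ)} {a : ℕ × ℕ} (hγ : (γ 0 ++ γ 1).Nodup)
    (hcover : (γ 0 ++ γ 1).toFinset = s.erase a) (ha : a ∈ s) (hxy : x a.1 + y a.2 ≠ 0) :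
    ∏ i, pathWeight x y (γ i) = (x a.1 + y a.2) * ∏ c ∈ s, (x c.1 + y c.2)⁻¹ := by
  have hsplit : ∏ i, pathWeight x y (γ i) = pathWeight x y (γ 0 ++ γ 1) := by
    simp only [Fin.prod_univ_two, pathWeight, List.map_append, List.prod_append]
  rw [hsplit, pathWeight_eq_prod_toFinset x y hγ, hcover, Finset.prod_erase_inv ha hxy]

theorem X_add_Y_ne_zero (i j : ℕ) : X i + Y j ≠ 0 := by
  rw [X, Y, ← map_add, ne_eq, map_eq_zero_iff _ (IsFractionRing.injective _ K)]
  intro h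
  simpa [MvPolynomial.coeff_X, Finsupp.single_eq_single_iff] using
    congrArg (MvPolynomial.coeff (Finsupp.single (Sum.inl i) 1)) h

theorem prod_pathWeight_two_eq_X_add_Y_mul_prod {γ : Fin 2 → List (ℕ × ℕ)} {k : ℕ}
    (hk : k ∈ Icc 1 3) (hγ : (γ 0 ++ γ 1).Nodup)
    (hcover : (γ 0 ++ γ 1).toFinset = (Icc 1 3 ×ˢ Icc 1 3).erase (k, k)) :
    ∏ i, pathWeight X Y (γ i) = (X k + Y k) * ∏ i ∈ Icc 1 3, ∏ j ∈ Icc 1 3, (X i + Y j)⁻¹ := by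
  rw [prod_pathWeight_two_of_toFinset_eq_erase hγ hcover (mem_product.2 ⟨hk, hk⟩)
    (X_add_Y_ne_zero k k), prod_product]

/-- Explicit formula in the case `a = 1`, `b = 1`, `c = 2`: the sum of weights of all
pairs of vertex-disjoint Up-Right paths `γ_1 : (2,1) → (1,3)`, `γ_2 : (3,1) → (2,3)` in
the `3×3` grid equals
`[(x_1+y_1) + (x_2+y_2) + (x_3+y_3)] · ∏_{i=1}^3 ∏_{j=1}^3 1/(x_i+y_j)`. -/
theorem stmt15 :
    Ftuple 3 3 2 X Y (fun i => ((i : ℕ) + 2, 1)) (fun i => ((i : ℕ) + 1, 3)) =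
      ((X 1 + Y 1) + (X 2 + Y 2) + (X 3 + Y 3)) *
        ∏ i ∈ Finset.Icc 1 3, ∏ j ∈ Finset.Icc 1 3, (X i + Y j)⁻¹ := by
  rw [Ftuple_eq_sum {pairAvoiding₃₃, pairAvoiding₂₂, pairAvoiding₁₁}
      (by simpa using isTuple_three_by_three_iff),
    sum_insert (by decide), sum_insert (by decide), sum_singleton,
    prod_pathWeight_two_eq_X_add_Y_mul_prod (k := 3) (by decide) (by decide) (by decide),
    prod_pathWeight_two_eq_X_add_Y_mul_prod (k := 2) (by decide) (by decide) (by decide),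
    prod_pathWeight_two_eq_X_add_Y_mul_prod (k := 1) (by decide) (by decide) (by decide)]
  ring
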